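/- Let G be a nonabelian transitively commutative group. If M and M' are two distinct maximal abelian subgroups of G, then M ∩ M' = Z(G). -/

import Mathlib

/-!
A maximal abelian subgroup `M` contains the center, since `M ⊔ Z(G)` is still abelian. Conversely,
if `g ∈ M ∩ M'` is not central, then `M` and `M'` both lie in the centralizer of `g`, which is
abelian by transitive commutativity; by maximality both equal it, so `M = M'`.
-/

namespace Subgroup

variable {G : Type*} [Group G]

def IsMaximalAbelian (K : Subgroup G) : Prop :=
  (∀ x ∈ K, ∀ y ∈ K, x * y = y * x) ∧
    ∀ N : Subgroup G, (∀ x ∈ N, ∀ y ∈ N, x * y = y * x) → K ≤ N → K = N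

theorem mul_comm_of_mem_sup_center {K : Subgroup G} (hK : ∀ x ∈ K, ∀ y ∈ K, x * y = y * x) :
    ∀ x ∈ K ⊔ center G, ∀ y ∈ K ⊔ center G, x * y = y * x := by
  intro x hx y hy
  obtain ⟨a, ha, z, hz, rfl⟩ := mem_sup_of_normal_right.mp hx
  obtain ⟨b, hb, w, hw, rfl⟩ := mem_sup_of_normal_right.mp hy
  have hab : Commute a (b * w) := Commute.mul_right (hK a ha b hb) (mem_center_iff.mp hw a)
  exact hab.mul_left (mem_center_iff.mp hz (b * w)).symm

theorem le_centralizer_singleton_of_mem {K : Subgroup G} (hK : ∀ x ∈ K, ∀ y ∈ K, x * y = y * x)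
    {g : G} (hg : g ∈ K) : K ≤ centralizer {g} := by
  intro x hx
  rw [mem_centralizer_singleton_iff]
  exact hK x hx g hg

namespace IsMaximalAbelian

theorem center_le {K : Subgroup G} (hK : K.IsMaximalAbelian) : center G ≤ K :=
  (hK.2 _ (mul_comm_of_mem_sup_center hK.1) le_sup_left).symm ▸ le_sup_right

theorem eq_centralizer_of_mem {K : Subgroup G} (hK : K.IsMaximalAbelian) {g : G} (hg : g ∈ K)
    (hC : ∀ x ∈ centralizer {g}, ∀ y ∈ centralizer {g}, x * y = y * x) :
    K = centralizer {g} :=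
  hK.2 _ hC (le_centralizer_singleton_of_mem hK.1 hg)

end IsMaximalAbelian

end Subgroup

theorem tc_maximal_abelian_intersection_eq_center_general
    (G : Type*) [Group G]
    (hTC : ∀ g : G, g ∉ Subgroup.center G →
      ∀ x ∈ Subgroup.centralizer {g}, ∀ y ∈ Subgroup.centralizer {g}, x * y = y * x)
    (M M' : Subgroup G)
    (hM : (∀ x ∈ M, ∀ y ∈ M, x * y = y * x) ∧
      ∀ N : Subgroup G, (∀ x ∈ N, ∀ y ∈ N, x * y = y * x) → M ≤ N → M = N)
    (hM' : (∀ x ∈ M', ∀ y ∈ M', x * y = y * x) ∧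
      ∀ N : Subgroup G, (∀ x ∈ N, ∀ y ∈ N, x * y = y * x) → M' ≤ N → M' = N)
    (hne : M ≠ M') :
    M ⊓ M' = Subgroup.center G := by
  have hMmax : M.IsMaximalAbelian := hM
  have hM'max : M'.IsMaximalAbelian := hM'
  refine le_antisymm (fun g hg => ?_) (le_inf hMmax.center_le hM'max.center_le)
  by_contra hgZ
  have hMg : M = Subgroup.centralizer {g} := hMmax.eq_centralizer_of_mem hg.1 (hTC g hgZ)
  have hM'g : M' = Subgroup.centralizer {g} := hM'max.eq_centralizer_of_mem hg.2 (hTC g hgZ)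
  exact hne (hMg.trans hM'g.symm)

/-- In a nonabelian transitively commutative group, two distinct maximal abelian
subgroups intersect exactly in the center. -/
theorem tc_maximal_abelian_intersection_eq_center
    (G : Type*) [Group G]
    (hnonab : ¬ ∀ a b : G, a * b = b * a)
    (hTC : ∀ g : G, g ∉ Subgroup.center G →
      ∀ x ∈ Subgroup.centralizer {g}, ∀ y ∈ Subgroup.centralizer {g}, x * y = y * x)
    (M M' : Subgroup G)
    (hM : (∀ x ∈ M, ∀ y ∈ M, x * y = y * x) ∧
      ∀ N : Subgroup G, (∀ x ∈ N, ∀ y ∈ N, x * y = y * x) → M ≤ N → M = N)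
    (hM' : (∀ x ∈ M', ∀ y ∈ M', x * y = y * x) ∧
      ∀ N : Subgroup G, (∀ x ∈ N, ∀ y ∈ N, x * y = y * x) → M' ≤ N → M' = N)
    (hne : M ≠ M') :
    M ⊓ M' = Subgroup.center G :=
  tc_maximal_abelian_intersection_eq_center_general G hTC M M' hM hM' hne
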